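/- arXiv:2602.01466 — 3 statements merged into one kernel-verified Lean document; each statement's English description precedes it below -/
import Mathlib

section
/- Hellinger bracketing entropy bound for the class of sigmoid-gated MLMoE densities (Lemma B.1, part (ii)): there exists a constant C > 0, depending only on Θ, the bound B on the input domain, d, K and k, such that for every ε ∈ (0, 1/2) there exist at most exp(C · K·d·k · log(1/ε)) pairs of functions (L_i, U_i), with L_i, U_i : [K] × X → [0,1] and L_i ≤ U_i pointwise, satisfying: (a) every p ∈ P_k(Θ) obeys L_i(s|x) ≤ p(s|x) ≤ U_i(s|x) for all (s,x) and some index i; and (b) sup_{x ∈ X} (½ Σ_{s=1}^K (√U_i(s|x) − √L_i(s|x))²)^{1/2} ≤ ε for every i. -/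
open MeasureTheory Filter

noncomputable section

/-- The sigmoid function `σ(t) = 1/(1+e^{-t})`. -/
def sigmoid (t : ℝ) : ℝ := 1 / (1 + Real.exp (-t))

/-- Euclidean inner product on `Fin d → ℝ`. -/
def dot {d : ℕ} (v w : Fin d → ℝ) : ℝ := ∑ i, v i * w i

/-- Euclidean norm on `Fin d → ℝ`. -/
def enorm2 {d : ℕ} (v : Fin d → ℝ) : ℝ := Real.sqrt (∑ i, (v i) ^ 2)

/-- The multinomial logistic expert `f(s|x; a, b)`. -/
def expertF (d K : ℕ) (a : Fin K → Fin d → ℝ) (b : Fin K → ℝ) (s : Fin K) (x : Fin d → ℝ) : ℝ :=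
  Real.exp (dot (a s) x + b s) / ∑ ℓ : Fin K, Real.exp (dot (a ℓ) x + b ℓ)

/-- An atom `(γ, α, β, a, b)` of a mixing measure. -/
structure MixAtom (d K : ℕ) where
  γ : ℝ
  α : Fin d → ℝ
  β : ℝ
  a : Fin K → Fin d → ℝ
  b : Fin K → ℝ

/-- A mixing measure: a finite tuple of atoms. -/
structure Mix (d K : ℕ) where
  k : ℕ
  atom : Fin k → MixAtom d K

/-- Numerator of the modified sigmoid gate of the `i`-th component. -/
def gateNum {d K : ℕ} (G : Mix d K) (i : Fin G.k) (x : Fin d → ℝ) : ℝ :=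
  Real.exp (G.atom i).γ * sigmoid (dot (G.atom i).α x + (G.atom i).β)

/-- The sigmoid-gated MLMoE conditional density `p_G(s|x)`. -/
def pG {d K : ℕ} (G : Mix d K) (s : Fin K) (x : Fin d → ℝ) : ℝ :=
  ∑ i : Fin G.k, (gateNum G i x / ∑ j : Fin G.k, gateNum G j x)
    * expertF d K (G.atom i).a (G.atom i).b s x

/-- The parameter tuple of an atom. -/
def atomTuple {d K : ℕ} (A : MixAtom d K) :
    ℝ × (Fin d → ℝ) × ℝ × (Fin K → Fin d → ℝ) × (Fin K → ℝ) :=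
  (A.γ, A.α, A.β, A.a, A.b)

/-- `G ∈ 𝒢_k(Θ)`: at most `k` atoms, all lying in `Θ`. -/
def memGk {d K : ℕ} (Θ : Set (ℝ × (Fin d → ℝ) × ℝ × (Fin K → Fin d → ℝ) × (Fin K → ℝ)))
    (k : ℕ) (G : Mix d K) : Prop :=
  G.k ≤ k ∧ ∀ i, atomTuple (G.atom i) ∈ Θ

/-- Hellinger distance between two probability vectors on `Fin K`. -/
def hellDist {K : ℕ} (p q : Fin K → ℝ) : ℝ :=
  Real.sqrt (2⁻¹ * ∑ s, (Real.sqrt (p s) - Real.sqrt (q s)) ^ 2)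

/-- Total variation distance between two probability vectors on `Fin K`. -/
def tvDist {K : ℕ} (p q : Fin K → ℝ) : ℝ := 2⁻¹ * ∑ s, |p s - q s|
set_option maxHeartbeats 1000000
section MLMoEAux

/-! ### Auxiliary definitions and lemmas -/

/-- The parameter space of a single atom. -/
abbrev Param (d K : ℕ) := ℝ × (Fin d → ℝ) × ℝ × (Fin K → Fin d → ℝ) × (Fin K → ℝ)

def mkAtom {d K : ℕ} (p : Param d K) : MixAtom d K := ⟨p.1, p.2.1, p.2.2.1, p.2.2.2.1, p.2.2.2.2⟩

def mkMix (d K k' : ℕ) (θ : Fin k' → Param d K) : Mix d K := ⟨k', fun i => mkAtom (θ i)⟩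

/-- The density as a function of a parameter tuple with exactly `k'` atoms. -/
def Pfun (d K k' : ℕ) (θ : Fin k' → Param d K) (x : Fin d → ℝ) (s : Fin K) : ℝ :=
  pG (mkMix d K k' θ) s x

lemma sigmoid_pos (t : ℝ) : 0 < sigmoid t := by unfold sigmoid; positivity

lemma contDiff_sigmoid' : ContDiff ℝ (⊤ : ℕ∞) sigmoid := by
  unfold sigmoid
  exact contDiff_const.div (contDiff_const.add (Real.contDiff_exp.comp contDiff_neg))
    (fun t => by positivity)

lemma Pfun_eq (d K k' : ℕ) (θ : Fin k' → Param d K) (x : Fin d → ℝ) (s : Fin K) :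
    Pfun d K k' θ x s =
    ∑ i : Fin k',
      (Real.exp ((θ i).1) * sigmoid (dot ((θ i).2.1) x + (θ i).2.2.1) /
        ∑ j : Fin k', Real.exp ((θ j).1) * sigmoid (dot ((θ j).2.1) x + (θ j).2.2.1)) *
      (Real.exp (dot ((θ i).2.2.2.1 s) x + (θ i).2.2.2.2 s) /
        ∑ ℓ : Fin K, Real.exp (dot ((θ i).2.2.2.1 ℓ) x + (θ i).2.2.2.2 ℓ)) := rfl

lemma contDiff_Pfun (d K k' : ℕ) :
    ContDiff ℝ (⊤ : ℕ∞) (fun p : (Fin k' → Param d K) × (Fin d → ℝ) =>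
      (fun s : Fin K => Pfun d K k' p.1 p.2 s)) := by
  rw [contDiff_pi]
  intro s
  simp only [Pfun_eq]
  apply ContDiff.sum
  intro i _
  have hgate : ∀ j : Fin k', ContDiff ℝ (⊤ : ℕ∞) (fun p : (Fin k' → Param d K) × (Fin d → ℝ) =>
      Real.exp ((p.1 j).1) * sigmoid (dot ((p.1 j).2.1) p.2 + (p.1 j).2.2.1)) := by
    intro j
    apply ContDiff.mul
    · exact Real.contDiff_exp.comp (by fun_prop)
    · apply contDiff_sigmoid'.comp
      apply ContDiff.add ?_ (by fun_prop)
      unfold dot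
      exact ContDiff.sum fun m _ => by fun_prop
  have hexpo : ∀ ℓ : Fin K, ContDiff ℝ (⊤ : ℕ∞) (fun p : (Fin k' → Param d K) × (Fin d → ℝ) =>
      Real.exp (dot ((p.1 i).2.2.2.1 ℓ) p.2 + (p.1 i).2.2.2.2 ℓ)) := by
    intro ℓ
    apply Real.contDiff_exp.comp
    apply ContDiff.add ?_ (by fun_prop)
    unfold dot
    exact ContDiff.sum fun m _ => by fun_prop
  apply ContDiff.mul
  · apply ContDiff.div (hgate i) (ContDiff.sum fun j _ => hgate j)
    intro p
    have hne : Nonempty (Fin k') := ⟨i⟩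
    exact ne_of_gt (Finset.sum_pos
      (fun j _ => mul_pos (Real.exp_pos _) (sigmoid_pos _)) Finset.univ_nonempty)
  · apply ContDiff.div (hexpo s) (ContDiff.sum fun ℓ _ => hexpo ℓ)
    intro p
    have hne : Nonempty (Fin K) := ⟨s⟩
    exact ne_of_gt (Finset.sum_pos (fun ℓ _ => Real.exp_pos _) Finset.univ_nonempty)

lemma exists_lip (d K k' : ℕ) (R B : ℝ) (hR : 0 ≤ R) (hB : 0 ≤ B) :
    ∃ Λ : ℝ, 0 ≤ Λ ∧ ∀ θ θ' : Fin k' → Param d K, ‖θ‖ ≤ R → ‖θ'‖ ≤ R →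
      ∀ x : Fin d → ℝ, ‖x‖ ≤ B → ∀ s : Fin K,
        |Pfun d K k' θ x s - Pfun d K k' θ' x s| ≤ Λ * ‖θ - θ'‖ := by
  set E := (Fin k' → Param d K) × (Fin d → ℝ)
  set F : E → (Fin K → ℝ) := fun p => fun s => Pfun d K k' p.1 p.2 s with hF
  have hsm : ContDiff ℝ (⊤ : ℕ∞) F := contDiff_Pfun d K k'
  set S : Set E := Metric.closedBall 0 R ×ˢ Metric.closedBall 0 B with hS
  have hScomp : IsCompact S := (isCompact_closedBall _ _).prod (isCompact_closedBall _ _)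
  have hSconv : Convex ℝ S := (convex_closedBall _ _).prod (convex_closedBall _ _)
  have hSne : S.Nonempty := ⟨(0, 0), by constructor <;> simp [Metric.mem_closedBall, *]⟩
  have hcont : ContinuousOn (fun z => ‖fderiv ℝ F z‖) S :=
    ((hsm.continuous_fderiv (by simp)).norm).continuousOn
  obtain ⟨z0, hz0S, hz0⟩ := hScomp.exists_isMaxOn hSne hcont
  refine ⟨‖fderiv ℝ F z0‖, norm_nonneg _, ?_⟩
  intro θ θ' hθ hθ' x hx s
  have hmem : (θ, x) ∈ S := ⟨by simpa [Metric.mem_closedBall, dist_eq_norm] using hθ,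
    by simpa [Metric.mem_closedBall, dist_eq_norm] using hx⟩
  have hmem' : (θ', x) ∈ S := ⟨by simpa [Metric.mem_closedBall, dist_eq_norm] using hθ',
    by simpa [Metric.mem_closedBall, dist_eq_norm] using hx⟩
  have hmv := hSconv.norm_image_sub_le_of_norm_fderiv_le
    (fun z _ => (hsm.differentiable (by simp)).differentiableAt)
    (fun z hz => hz0 hz) hmem' hmem
  have h1 : |Pfun d K k' θ x s - Pfun d K k' θ' x s| ≤ ‖F (θ, x) - F (θ', x)‖ := by
    have := norm_le_pi_norm (F (θ, x) - F (θ', x)) s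
    simpa [F, Real.norm_eq_abs] using this
  have h2 : ‖(θ, x) - (θ', x)‖ = ‖θ - θ'‖ := by
    simp [Prod.norm_def, norm_nonneg]
  calc |Pfun d K k' θ x s - Pfun d K k' θ' x s| ≤ ‖F (θ, x) - F (θ', x)‖ := h1
    _ ≤ ‖fderiv ℝ F z0‖ * ‖(θ, x) - (θ', x)‖ := hmv
    _ = ‖fderiv ℝ F z0‖ * ‖θ - θ'‖ := by rw [h2]

lemma pG_nonneg {d K : ℕ} (G : Mix d K) (s : Fin K) (x : Fin d → ℝ) : 0 ≤ pG G s x := by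
  unfold pG
  refine Finset.sum_nonneg fun i _ => mul_nonneg (div_nonneg ?_ ?_) ?_
  · exact (mul_pos (Real.exp_pos _) (sigmoid_pos _)).le
  · exact Finset.sum_nonneg fun j _ => (mul_pos (Real.exp_pos _) (sigmoid_pos _)).le
  · exact div_nonneg (Real.exp_pos _).le (Finset.sum_nonneg fun _ _ => (Real.exp_pos _).le)

lemma pG_le_one {d K : ℕ} (G : Mix d K) (s : Fin K) (x : Fin d → ℝ) : pG G s x ≤ 1 := by
  unfold pG
  have hw : ∀ i : Fin G.k, 0 ≤ gateNum G i x / ∑ j : Fin G.k, gateNum G j x := fun i =>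
    div_nonneg (mul_pos (Real.exp_pos _) (sigmoid_pos _)).le
      (Finset.sum_nonneg fun j _ => (mul_pos (Real.exp_pos _) (sigmoid_pos _)).le)
  have he : ∀ i : Fin G.k, expertF d K (G.atom i).a (G.atom i).b s x ≤ 1 := by
    intro i
    unfold expertF
    refine div_le_one_of_le₀ ?_ (Finset.sum_nonneg fun _ _ => (Real.exp_pos _).le)
    exact Finset.single_le_sum (f := fun ℓ => Real.exp (dot ((G.atom i).a ℓ) x + (G.atom i).b ℓ))
      (fun ℓ _ => (Real.exp_pos _).le) (Finset.mem_univ s)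
  calc ∑ i : Fin G.k, (gateNum G i x / ∑ j : Fin G.k, gateNum G j x)
          * expertF d K (G.atom i).a (G.atom i).b s x
      ≤ ∑ i : Fin G.k, (gateNum G i x / ∑ j : Fin G.k, gateNum G j x) := by
        refine Finset.sum_le_sum fun i _ => ?_
        calc (gateNum G i x / ∑ j : Fin G.k, gateNum G j x)
              * expertF d K (G.atom i).a (G.atom i).b s x
            ≤ (gateNum G i x / ∑ j : Fin G.k, gateNum G j x) * 1 :=
              mul_le_mul_of_nonneg_left (he i) (hw i)
          _ = _ := mul_one _
    _ = (∑ i : Fin G.k, gateNum G i x) / ∑ j : Fin G.k, gateNum G j x := by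
        rw [Finset.sum_div]
    _ ≤ 1 := div_self_le_one _

lemma param_coord_le {d K : ℕ} (v : Param d K) :
    |v.1| ≤ ‖v‖ ∧ (∀ i, |v.2.1 i| ≤ ‖v‖) ∧ |v.2.2.1| ≤ ‖v‖ ∧
    (∀ s i, |v.2.2.2.1 s i| ≤ ‖v‖) ∧ (∀ s, |v.2.2.2.2 s| ≤ ‖v‖) := by
  have h2 : ‖v.2‖ ≤ ‖v‖ := norm_snd_le v
  have h22 : ‖v.2.2‖ ≤ ‖v‖ := le_trans (norm_snd_le v.2) h2
  have h222 : ‖v.2.2.2‖ ≤ ‖v‖ := le_trans (norm_snd_le v.2.2) h22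
  refine ⟨?_, ?_, ?_, ?_, ?_⟩
  · simpa [Real.norm_eq_abs] using norm_fst_le v
  · intro i
    calc |v.2.1 i| = ‖v.2.1 i‖ := (Real.norm_eq_abs _).symm
      _ ≤ ‖v.2.1‖ := norm_le_pi_norm _ i
      _ ≤ ‖v.2‖ := norm_fst_le v.2
      _ ≤ ‖v‖ := h2
  · calc |v.2.2.1| = ‖v.2.2.1‖ := (Real.norm_eq_abs _).symm
      _ ≤ ‖v.2.2‖ := norm_fst_le v.2.2
      _ ≤ ‖v‖ := h22
  · intro s i
    calc |v.2.2.2.1 s i| = ‖v.2.2.2.1 s i‖ := (Real.norm_eq_abs _).symm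
      _ ≤ ‖v.2.2.2.1 s‖ := norm_le_pi_norm _ i
      _ ≤ ‖v.2.2.2.1‖ := norm_le_pi_norm _ s
      _ ≤ ‖v.2.2.2‖ := norm_fst_le v.2.2.2
      _ ≤ ‖v‖ := h222
  · intro s
    calc |v.2.2.2.2 s| = ‖v.2.2.2.2 s‖ := (Real.norm_eq_abs _).symm
      _ ≤ ‖v.2.2.2.2‖ := norm_le_pi_norm _ s
      _ ≤ ‖v.2.2.2‖ := norm_snd_le v.2.2.2
      _ ≤ ‖v‖ := h222

lemma param_norm_le {d K : ℕ} (v : Param d K) (r : ℝ) (hr : 0 ≤ r)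
    (h1 : |v.1| ≤ r) (h2 : ∀ i, |v.2.1 i| ≤ r) (h3 : |v.2.2.1| ≤ r)
    (h4 : ∀ s i, |v.2.2.2.1 s i| ≤ r) (h5 : ∀ s, |v.2.2.2.2 s| ≤ r) : ‖v‖ ≤ r := by
  rw [Prod.norm_def]
  refine max_le (by simpa [Real.norm_eq_abs] using h1) ?_
  rw [Prod.norm_def]
  refine max_le ((pi_norm_le_iff_of_nonneg hr).mpr fun i => by
    simpa [Real.norm_eq_abs] using h2 i) ?_
  rw [Prod.norm_def]
  refine max_le (by simpa [Real.norm_eq_abs] using h3) ?_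
  rw [Prod.norm_def]
  refine max_le ((pi_norm_le_iff_of_nonneg hr).mpr fun s =>
    (pi_norm_le_iff_of_nonneg hr).mpr fun i => by simpa [Real.norm_eq_abs] using h4 s i) ?_
  exact (pi_norm_le_iff_of_nonneg hr).mpr fun s => by simpa [Real.norm_eq_abs] using h5 s

/-! ### The grid -/

def gridPt (R δ : ℝ) {m : ℕ} (j : Fin m) : ℝ := -R + j * δ

def roundIdx (R δ t : ℝ) : Fin (⌈2*R/δ⌉₊ + 1) :=
  ⟨min ⌊(t+R)/δ⌋₊ ⌈2*R/δ⌉₊, by omega⟩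

lemma grid_approx (R δ : ℝ) (hR : 0 ≤ R) (hδ : 0 < δ) (t : ℝ) (ht : |t| ≤ R) :
    |t - gridPt R δ (roundIdx R δ t)| ≤ δ := by
  obtain ⟨htl, htu⟩ := abs_le.mp ht
  have htR : 0 ≤ t + R := by linarith
  have hjm : ⌊(t+R)/δ⌋₊ ≤ ⌈2*R/δ⌉₊ := by
    refine le_trans (Nat.floor_le_floor ?_) (Nat.floor_le_ceil _)
    gcongr
    linarith
  have hval : (roundIdx R δ t : ℝ) = (⌊(t+R)/δ⌋₊ : ℝ) := by
    simp [roundIdx, Nat.min_eq_left hjm]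
  have a1 : (⌊(t+R)/δ⌋₊ : ℝ) * δ ≤ t + R := by
    rw [← le_div_iff₀ hδ]; exact Nat.floor_le (by positivity)
  have a2 : t + R < ((⌊(t+R)/δ⌋₊ : ℝ) + 1) * δ := by
    rw [← div_lt_iff₀ hδ]; exact Nat.lt_floor_add_one _
  rw [abs_le]
  unfold gridPt
  rw [hval]
  constructor <;> nlinarith

lemma gridPt_abs_le (R δ : ℝ) (hR : 0 ≤ R) (hδ : 0 < δ) (j : Fin (⌈2*R/δ⌉₊ + 1)) :
    |gridPt R δ j| ≤ R + δ := by
  have hj : (j : ℝ) ≤ (⌈2*R/δ⌉₊ : ℝ) := by exact_mod_cast Nat.lt_succ_iff.mp j.2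
  have hceil : (⌈2*R/δ⌉₊ : ℝ) < 2*R/δ + 1 := Nat.ceil_lt_add_one (by positivity)
  have h1 : (j : ℝ) * δ ≤ 2*R + δ := by
    have h0 : (j:ℝ) * δ ≤ (2*R/δ + 1) * δ := by nlinarith
    calc (j:ℝ)*δ ≤ (2*R/δ+1)*δ := h0
      _ = 2*R + δ := by field_simp
  unfold gridPt
  rw [abs_le]
  constructor <;> nlinarith [mul_nonneg (Nat.cast_nonneg (j:ℕ) : (0:ℝ) ≤ j) hδ.le]

lemma sq_sqrt_sub_le {l u : ℝ} (h0 : 0 ≤ l) (h : l ≤ u) :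
    (Real.sqrt u - Real.sqrt l)^2 ≤ u - l := by
  have hu : 0 ≤ u := le_trans h0 h
  have h1 : Real.sqrt l * Real.sqrt l = l := Real.mul_self_sqrt h0
  have h2 : Real.sqrt u * Real.sqrt u = u := Real.mul_self_sqrt hu
  have h3 : Real.sqrt l ≤ Real.sqrt u := Real.sqrt_le_sqrt h
  nlinarith [Real.sqrt_nonneg l, Real.sqrt_nonneg u]

/-! ### Grid on the parameter space -/

abbrev IdxA (d K : ℕ) (M δ : ℝ) : Type :=
  Fin (⌈2*M/δ⌉₊+1) × (Fin d → Fin (⌈2*M/δ⌉₊+1)) × Fin (⌈2*M/δ⌉₊+1) ×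
    (Fin K → Fin d → Fin (⌈2*M/δ⌉₊+1)) × (Fin K → Fin (⌈2*M/δ⌉₊+1))

def netA (d K : ℕ) (M δ : ℝ) (ι : IdxA d K M δ) : Param d K :=
  (gridPt M δ ι.1, fun j => gridPt M δ (ι.2.1 j), gridPt M δ ι.2.2.1,
    fun s j => gridPt M δ (ι.2.2.2.1 s j), fun s => gridPt M δ (ι.2.2.2.2 s))

def roundA (d K : ℕ) (M δ : ℝ) (v : Param d K) : IdxA d K M δ :=
  (roundIdx M δ v.1, fun j => roundIdx M δ (v.2.1 j), roundIdx M δ v.2.2.1,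
    fun s j => roundIdx M δ (v.2.2.2.1 s j), fun s => roundIdx M δ (v.2.2.2.2 s))

lemma netA_norm_le {d K : ℕ} {M δ : ℝ} (hM : 0 ≤ M) (hδ : 0 < δ) (ι : IdxA d K M δ) :
    ‖netA d K M δ ι‖ ≤ M + δ := by
  refine param_norm_le _ _ (by linarith) ?_ ?_ ?_ ?_ ?_ <;>
    first
      | exact gridPt_abs_le M δ hM hδ _
      | exact fun i => gridPt_abs_le M δ hM hδ _
      | exact fun s i => gridPt_abs_le M δ hM hδ _

lemma roundA_approx {d K : ℕ} {M δ : ℝ} (hM : 0 ≤ M) (hδ : 0 < δ) (v : Param d K)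
    (hv : ‖v‖ ≤ M) : ‖v - netA d K M δ (roundA d K M δ v)‖ ≤ δ := by
  obtain ⟨c1, c2, c3, c4, c5⟩ := param_coord_le v
  refine param_norm_le _ _ hδ.le ?_ ?_ ?_ ?_ ?_
  · exact grid_approx M δ hM hδ _ (le_trans c1 hv)
  · exact fun i => grid_approx M δ hM hδ _ (le_trans (c2 i) hv)
  · exact grid_approx M δ hM hδ _ (le_trans c3 hv)
  · exact fun s i => grid_approx M δ hM hδ _ (le_trans (c4 s i) hv)
  · exact fun s => grid_approx M δ hM hδ _ (le_trans (c5 s) hv)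

lemma card_IdxA (d K : ℕ) (M δ : ℝ) :
    Fintype.card (IdxA d K M δ) = (⌈2*M/δ⌉₊+1)^(2+d+K*d+K) := by
  simp only [IdxA, Fintype.card_prod, Fintype.card_fun, Fintype.card_fin]
  ring

end MLMoEAux

lemma xnorm_le {d : ℕ} (x : Fin d → ℝ) (B : ℝ) (hB : 0 ≤ B) (h : enorm2 x ≤ B) : ‖x‖ ≤ B := by
  rw [pi_norm_le_iff_of_nonneg hB]
  intro i
  rw [Real.norm_eq_abs, ← Real.sqrt_sq_eq_abs]
  refine le_trans (Real.sqrt_le_sqrt ?_) h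
  exact Finset.single_le_sum (f := fun j => (x j)^2) (fun j _ => sq_nonneg (x j))
    (Finset.mem_univ i)


set_option maxHeartbeats 4000000 in

/-- **Hellinger bracketing entropy bound for the class of sigmoid-gated MLMoE densities**
(Lemma B.1, part (ii)): there is `C > 0` such that for every `ε ∈ (0, 1/2)` there are at
most `exp(C·K·d·k·log(1/ε))` brackets `[L_i, U_i]` of functions on `[K] × X` with values
in `[0,1]`, covering `P_k(Θ)`, and each of Hellinger width at most `ε` uniformly in
`x ∈ X`. -/
theorem bracketing_entropy_bound_sigmoid_MLMoE
    (d K k : ℕ) (hd : 1 ≤ d) (hK : 2 ≤ K) (hkpos : 1 ≤ k)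
    (Θ : Set (ℝ × (Fin d → ℝ) × ℝ × (Fin K → Fin d → ℝ) × (Fin K → ℝ)))
    (hΘ : IsCompact Θ)
    (Xset : Set (Fin d → ℝ)) (B : ℝ) (hB : 0 < B) (hX : ∀ x ∈ Xset, enorm2 x ≤ B) :
    ∃ C > (0 : ℝ), ∀ ε : ℝ, 0 < ε → ε < 1 / 2 →
      ∃ N : ℕ, ∃ L U : Fin N → Fin K → (Fin d → ℝ) → ℝ,
        (N : ℝ) ≤ Real.exp (C * ((K : ℝ) * d * k) * Real.log (1 / ε)) ∧
        -- brackets consist of functions with values in `[0, 1]`, with `L_i ≤ U_i`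
        (∀ i : Fin N, ∀ s : Fin K, ∀ x ∈ Xset,
          0 ≤ L i s x ∧ L i s x ≤ U i s x ∧ U i s x ≤ 1) ∧
        -- (a) every density in the class lies in some bracket
        (∀ G : Mix d K, memGk Θ k G → ∃ i : Fin N, ∀ s : Fin K, ∀ x ∈ Xset,
          L i s x ≤ pG G s x ∧ pG G s x ≤ U i s x) ∧
        -- (b) each bracket has uniform Hellinger width at most `ε`
        (∀ i : Fin N, ∀ x ∈ Xset,
          Real.sqrt (2⁻¹ * ∑ s : Fin K,
            (Real.sqrt (U i s x) - Real.sqrt (L i s x)) ^ 2) ≤ ε) := by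
  classical
  -- bound on Θ
  obtain ⟨M0, hM0⟩ := hΘ.isBounded.subset_closedBall 0
  set M : ℝ := max M0 0 with hMdef
  have hM : 0 ≤ M := le_max_right _ _
  have hΘM : Θ ⊆ Metric.closedBall 0 M :=
    hM0.trans (Metric.closedBall_subset_closedBall (le_max_left _ _))
  -- Lipschitz constants
  choose Λc hΛc0 hΛc using fun j : ℕ => exists_lip d K j (M+1) B (by linarith) hB.le
  set Λ : ℝ := 1 + ∑ j ∈ Finset.range (k+1), Λc j with hΛdef
  have hsum0 : 0 ≤ ∑ j ∈ Finset.range (k+1), Λc j := Finset.sum_nonneg fun j _ => hΛc0 j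
  have hΛ1 : 1 ≤ Λ := by rw [hΛdef]; linarith
  have hΛpos : 0 < Λ := lt_of_lt_of_le one_pos hΛ1
  have hΛj : ∀ j, j ≤ k → Λc j ≤ Λ := by
    intro j hj
    have h1 : Λc j ≤ ∑ i ∈ Finset.range (k+1), Λc i :=
      Finset.single_le_sum (fun i _ => hΛc0 i) (Finset.mem_range.mpr (by omega))
    rw [hΛdef]; linarith
  have hK2 : (2:ℝ) ≤ (K:ℝ) := by exact_mod_cast hK
  have hKpos : (0:ℝ) < (K:ℝ) := by linarith
  have hKΛ : (2:ℝ) ≤ (K:ℝ)*Λ := by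
    have := mul_le_mul hK2 hΛ1 zero_le_one (by linarith : (0:ℝ) ≤ (K:ℝ))
    linarith
  set A : ℝ := (2*M+3) * (1 + K*Λ) with hAdef
  have h31 : (3:ℝ) ≤ 2*M+3 := by linarith
  have h32 : (3:ℝ) ≤ 1+(K:ℝ)*Λ := by linarith
  have hA9 : 9 ≤ A := by
    have := mul_le_mul h31 h32 (by norm_num) (by linarith)
    rw [hAdef]; linarith
  have hkR : (0:ℝ) ≤ (k:ℝ) := Nat.cast_nonneg k
  set A' : ℝ := ((k:ℝ)+1) * A with hA'def
  have hk1 : (1:ℝ) ≤ (k:ℝ)+1 := by linarith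
  have hA'1 : 1 ≤ A' := by
    have := mul_le_mul hk1 hA9 (by norm_num) (by linarith)
    rw [hA'def]; linarith
  have hlog2 : 0 < Real.log 2 := Real.log_pos one_lt_two
  have hlogA' : 0 ≤ Real.log A' := Real.log_nonneg hA'1
  set D : ℕ := 2 + d + K*d + K with hDdef
  have hD1 : 1 ≤ D := by omega
  set C : ℝ := 5 * (Real.log A' / Real.log 2 + 2) with hCdef
  have hCpos : 0 < C := by rw [hCdef]; positivity
  refine ⟨C, hCpos, ?_⟩
  intro ε hε hεhalf
  have hε1 : ε ≤ 1 := by linarith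
  have hε21 : ε^2 ≤ 1 := by nlinarith
  have hε2pos : (0:ℝ) < ε^2 := by positivity
  set η : ℝ := ε^2 / K with hηdef
  have hηpos : 0 < η := by rw [hηdef]; positivity
  set δ : ℝ := min 1 (η/Λ) with hδdef
  have hδpos : 0 < δ := lt_min one_pos (by positivity)
  have hδ1 : δ ≤ 1 := min_le_left _ _
  set mm : ℕ := ⌈2*M/δ⌉₊ + 1 with hmm
  -- the index type
  set T := (k' : Fin (k+1)) × (Fin k'.1 → IdxA d K M δ) with hT
  set cen : T → Fin K → (Fin d → ℝ) → ℝ :=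
    fun t s x => Pfun d K t.1.1 (fun i => netA d K M δ (t.2 i)) x s with hcen
  have hc0 : ∀ t s x, 0 ≤ cen t s x := fun t s x => pG_nonneg _ s x
  have hc1 : ∀ t s x, cen t s x ≤ 1 := fun t s x => pG_le_one _ s x
  -- cardinality bound, done first
  have hcard : Fintype.card T ≤ (k+1) * mm^(D*k) := by
    calc Fintype.card T = ∑ a : Fin (k+1), Fintype.card (Fin a.1 → IdxA d K M δ) :=
          Fintype.card_sigma
      _ ≤ ∑ _a : Fin (k+1), mm^(D*k) := by
          refine Finset.sum_le_sum fun a _ => ?_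
          rw [Fintype.card_fun, Fintype.card_fin, card_IdxA]
          calc (mm^D)^(a.1) ≤ (mm^D)^k :=
                Nat.pow_le_pow_right (Nat.one_le_pow _ _ (by omega)) (by omega)
            _ = mm^(D*k) := (pow_mul mm D k).symm
      _ = (k+1) * mm^(D*k) := by
          rw [Finset.sum_const, Finset.card_univ, Fintype.card_fin, smul_eq_mul]
  have hceil : (⌈2*M/δ⌉₊ : ℝ) < 2*M/δ + 1 := Nat.ceil_lt_add_one (by positivity)
  have hmm2 : (mm:ℝ) ≤ 2*M/δ + 2 := by rw [hmm]; push_cast; linarith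
  have hmm0 : (0:ℝ) ≤ (mm:ℝ) := Nat.cast_nonneg mm
  have hkey : (mm:ℝ) * ε^2 ≤ A := by
    have hA' : A = 2*M + 2*M*((K:ℝ)*Λ) + 3 + 3*((K:ℝ)*Λ) := by rw [hAdef]; ring
    rcases min_cases (1:ℝ) (η/Λ) with ⟨hmin, hge⟩ | ⟨hmin, hle⟩
    · -- δ = 1
      have hδ1' : δ = 1 := by rw [hδdef, hmin]
      rw [hδ1', div_one] at hmm2
      have h6 : (mm:ℝ)*ε^2 ≤ (mm:ℝ) := by nlinarith
      have h7 : (0:ℝ) ≤ (K:ℝ)*Λ := by linarith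
      rw [hA']
      nlinarith
    · -- δ = η/Λ
      have hδ2' : δ = η/Λ := by rw [hδdef, hmin]
      have hηne : η ≠ 0 := ne_of_gt hηpos
      have hΛne : Λ ≠ 0 := ne_of_gt hΛpos
      have hεne : ε^2 ≠ 0 := ne_of_gt hε2pos
      have hKne : (K:ℝ) ≠ 0 := ne_of_gt hKpos
      have hrw : 2*M/δ = 2*M*Λ*K/ε^2 := by
        rw [hδ2', hηdef]
        field_simp
      rw [hrw] at hmm2
      have h4 : 2*M*Λ*(K:ℝ)/ε^2 * ε^2 = 2*M*Λ*K := by field_simp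
      have h5' := mul_le_mul_of_nonneg_right hmm2 hε2pos.le
      have h5 : (mm:ℝ)*ε^2 ≤ 2*M*Λ*(K:ℝ) + 2*ε^2 := by nlinarith [h5', h4]
      have h7 : (0:ℝ) ≤ (K:ℝ)*Λ := by linarith
      have h8 : 2*M*Λ*(K:ℝ) = 2*M*((K:ℝ)*Λ) := by ring
      rw [hA']
      nlinarith
  have hmmR : (mm:ℝ) ≤ A/ε^2 := by rw [le_div_iff₀ hε2pos]; exact hkey
  have hAe1 : 1 ≤ A/ε^2 := by rw [le_div_iff₀ hε2pos]; nlinarith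
  have hNR2 : ((Fintype.card T : ℕ):ℝ) ≤ (A'/ε^2)^(D*k) := by
    have hNR : ((Fintype.card T : ℕ):ℝ) ≤ ((k:ℝ)+1) * (A/ε^2)^(D*k) := by
      calc ((Fintype.card T : ℕ):ℝ) ≤ (((k+1) * mm^(D*k) : ℕ):ℝ) := by exact_mod_cast hcard
        _ = ((k:ℝ)+1) * (mm:ℝ)^(D*k) := by push_cast; ring
        _ ≤ ((k:ℝ)+1) * (A/ε^2)^(D*k) := by
            refine mul_le_mul_of_nonneg_left ?_ (by linarith)
            exact pow_le_pow_left₀ hmm0 hmmR _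
    calc ((Fintype.card T : ℕ):ℝ) ≤ ((k:ℝ)+1) * (A/ε^2)^(D*k) := hNR
      _ ≤ ((k:ℝ)+1)^(D*k) * (A/ε^2)^(D*k) := by
          refine mul_le_mul_of_nonneg_right ?_ (by positivity)
          exact le_self_pow₀ hk1 (by positivity)
      _ = (((k:ℝ)+1) * (A/ε^2))^(D*k) := (mul_pow _ _ _).symm
      _ = (A'/ε^2)^(D*k) := by rw [hA'def]; ring
  have hA'e : (0:ℝ) < A'/ε^2 := by positivity
  have hL2 : Real.log 2 ≤ Real.log (1/ε) := by
    refine Real.log_le_log (by norm_num) ?_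
    rw [le_div_iff₀ hε]; linarith
  have hLpos : 0 < Real.log (1/ε) := lt_of_lt_of_le hlog2 hL2
  have hNbound : ((Fintype.card T : ℕ):ℝ) ≤
      Real.exp (C * ((K:ℝ)*d*k) * Real.log (1/ε)) := by
    have hexp : (A'/ε^2)^(D*k) = Real.exp ((D*k : ℕ) * Real.log (A'/ε^2)) := by
      rw [Real.exp_nat_mul, Real.exp_log hA'e]
    have hlogrw : Real.log (A'/ε^2) = Real.log A' + 2*Real.log (1/ε) := by
      have hA'ne : A' ≠ 0 := by positivity
      have hεne2 : ε^2 ≠ 0 := ne_of_gt hε2pos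
      rw [Real.log_div hA'ne hεne2, Real.log_pow, one_div, Real.log_inv]
      push_cast; ring
    have hDkcast : ((D*k : ℕ):ℝ) ≤ 5*((K:ℝ)*d*k) := by
      have hnat : D*k ≤ 5*(K*d*k) := by
        have h1 : D ≤ 5*(K*d) := by
          rw [hDdef]
          have a1 : K ≤ K*d := by simpa using Nat.mul_le_mul (le_refl K) hd
          have a2 : d ≤ K*d := by simpa using Nat.mul_le_mul (show 1 ≤ K by omega) (le_refl d)
          have a3 : 2 ≤ K*d := by simpa using Nat.mul_le_mul hK hd
          generalize K*d = n at a1 a2 a3 ⊢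
          omega
        calc D*k ≤ 5*(K*d)*k := Nat.mul_le_mul_right k h1
          _ = 5*(K*d*k) := by ring
      exact_mod_cast hnat
    have hfinal : ((D*k : ℕ):ℝ) * (Real.log A' + 2*Real.log (1/ε)) ≤
        C * ((K:ℝ)*d*k) * Real.log (1/ε) := by
      have h2 : Real.log A' ≤ (Real.log A'/Real.log 2) * Real.log (1/ε) := by
        rw [div_mul_eq_mul_div, le_div_iff₀ hlog2]
        nlinarith
      have hsum : 0 ≤ Real.log A' + 2*Real.log (1/ε) := by nlinarith
      have h3 := mul_le_mul_of_nonneg_right hDkcast hsum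
      have h4 : 5*((K:ℝ)*d*k) * (Real.log A' + 2*Real.log (1/ε)) ≤
          5*((K:ℝ)*d*k) * ((Real.log A'/Real.log 2) * Real.log (1/ε)
            + 2*Real.log (1/ε)) := by
        refine mul_le_mul_of_nonneg_left ?_ (by positivity)
        linarith
      have h5 : 5*((K:ℝ)*d*k) * ((Real.log A'/Real.log 2) * Real.log (1/ε)
          + 2*Real.log (1/ε)) = C * ((K:ℝ)*d*k) * Real.log (1/ε) := by
        rw [hCdef]; ring
      linarith
    calc ((Fintype.card T : ℕ):ℝ) ≤ (A'/ε^2)^(D*k) := hNR2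
      _ = Real.exp ((D*k : ℕ) * Real.log (A'/ε^2)) := hexp
      _ ≤ Real.exp (C * ((K:ℝ)*d*k) * Real.log (1/ε)) := by
          rw [Real.exp_le_exp, hlogrw]
          exact hfinal
  -- the equivalence, kept opaque
  have eT : Fin (Fintype.card T) ≃ T := (Fintype.equivFin T).symm
  refine ⟨Fintype.card T, fun i s x => max (cen (eT i) s x - η) 0,
    fun i s x => min (cen (eT i) s x + η) 1, hNbound, ?_, ?_, ?_⟩
  · -- values in [0,1]
    intro i s x hx
    have h0 := hc0 (eT i) s x
    have h1 := hc1 (eT i) s x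
    refine ⟨le_max_right _ _, ?_, min_le_right _ _⟩
    refine max_le (le_min ?_ ?_) (le_min ?_ ?_) <;> linarith
  · -- coverage
    intro G hG
    obtain ⟨hGk, hGΘ⟩ := hG
    set θG : Fin G.k → Param d K := fun i => atomTuple (G.atom i) with hθGdef
    have hθGnorm : ‖θG‖ ≤ M := by
      rw [pi_norm_le_iff_of_nonneg hM]
      intro i
      have := hΘM (hGΘ i)
      rwa [Metric.mem_closedBall, dist_zero_right] at this
    set t : T := ⟨⟨G.k, by omega⟩, fun i => roundA d K M δ (θG i)⟩ with ht
    refine ⟨eT.symm t, ?_⟩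
    intro s x hx
    simp only [Equiv.apply_symm_apply]
    have hpg : pG G s x = Pfun d K G.k θG x s := rfl
    have hnet_norm : ‖(fun i => netA d K M δ (t.2 i) : Fin G.k → Param d K)‖ ≤ M + 1 := by
      rw [pi_norm_le_iff_of_nonneg (by linarith)]
      intro i
      exact (netA_norm_le hM hδpos _).trans (by linarith)
    have hdiff : ‖θG - (fun i => netA d K M δ (t.2 i))‖ ≤ δ := by
      rw [pi_norm_le_iff_of_nonneg hδpos.le]
      intro i
      have hre : (θG - fun i => netA d K M δ (t.2 i)) i
          = θG i - netA d K M δ (roundA d K M δ (θG i)) := rfl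
      rw [hre]
      exact roundA_approx hM hδpos _ (le_trans (norm_le_pi_norm θG i) hθGnorm)
    have hxB : ‖x‖ ≤ B := xnorm_le x B hB.le (hX x hx)
    have hlipest := hΛc G.k θG (fun i => netA d K M δ (t.2 i))
      (by linarith) hnet_norm x hxB s
    have hbound : |pG G s x - cen t s x| ≤ η := by
      rw [hpg]
      have hcent : cen t s x = Pfun d K G.k (fun i => netA d K M δ (t.2 i)) x s := rfl
      rw [hcent]
      refine hlipest.trans ?_
      calc Λc G.k * ‖θG - (fun i => netA d K M δ (t.2 i))‖ ≤ Λ * δ :=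
            mul_le_mul (hΛj G.k hGk) hdiff (norm_nonneg _) (by linarith)
        _ ≤ Λ * (η/Λ) := mul_le_mul_of_nonneg_left (min_le_right _ _) hΛpos.le
        _ = η := by field_simp
    obtain ⟨hb1, hb2⟩ := abs_le.mp hbound
    constructor
    · exact max_le (by linarith) (pG_nonneg G s x)
    · exact le_min (by linarith) (pG_le_one G s x)
  · -- Hellinger width
    intro i x hx
    have hterm : ∀ s : Fin K,
        (Real.sqrt (min (cen (eT i) s x + η) 1) - Real.sqrt (max (cen (eT i) s x - η) 0))^2
          ≤ 2*η := by
      intro s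
      have h0 := hc0 (eT i) s x
      have h1 := hc1 (eT i) s x
      have hL0 : (0:ℝ) ≤ max (cen (eT i) s x - η) 0 := le_max_right _ _
      have hLU : max (cen (eT i) s x - η) 0 ≤ min (cen (eT i) s x + η) 1 := by
        refine max_le (le_min ?_ ?_) (le_min ?_ ?_) <;> linarith
      have hUL : min (cen (eT i) s x + η) 1 - max (cen (eT i) s x - η) 0 ≤ 2*η := by
        have h5 := min_le_left (cen (eT i) s x + η) 1
        have h6 := le_max_left (cen (eT i) s x - η) 0
        linarith
      exact le_trans (sq_sqrt_sub_le hL0 hLU) hUL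
    have hsum : (2⁻¹ : ℝ) * ∑ s : Fin K,
        (Real.sqrt (min (cen (eT i) s x + η) 1) - Real.sqrt (max (cen (eT i) s x - η) 0))^2
        ≤ ε^2 := by
      have h1 : ∑ s : Fin K,
          (Real.sqrt (min (cen (eT i) s x + η) 1) - Real.sqrt (max (cen (eT i) s x - η) 0))^2
          ≤ ∑ _s : Fin K, 2*η := Finset.sum_le_sum fun s _ => hterm s
      have h2 : ∑ _s : Fin K, (2*η : ℝ) = (K:ℝ) * (2*η) := by
        rw [Finset.sum_const, Finset.card_univ, Fintype.card_fin, nsmul_eq_mul]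
      have h3 : (2⁻¹:ℝ) * ((K:ℝ) * (2*η)) = ε^2 := by
        rw [hηdef]; field_simp
      nlinarith
    calc Real.sqrt (2⁻¹ * ∑ s : Fin K,
          (Real.sqrt (min (cen (eT i) s x + η) 1) - Real.sqrt (max (cen (eT i) s x - η) 0))^2)
        ≤ Real.sqrt (ε^2) := Real.sqrt_le_sqrt hsum
      _ = ε := Real.sqrt_sq hε.le
end
end

section
/- Failure of the interaction PDE under the Euclidean affinity score: fix x ∈ ℝ^d, s ∈ [K], and expert parameters (a, b), and define ū(α, β, τ) = σ((‖α − x‖ + β)/τ) · f(s|x; a, b) for α ∈ ℝ^d with α ≠ x, β ∈ ℝ, τ > 0. Then ∂ū/∂τ(α, β, τ) + (1/τ)·( α · ∇_α ū(α, β, τ) + β · ∂ū/∂β(α, β, τ) ) = (1/τ²) · σ'((‖α − x‖ + β)/τ) · f(s|x; a, b) · ( x · (α − x) ) / ‖α − x‖, where σ' = σ(1 − σ). In particular, since σ' > 0 and f(s|x;a,b) > 0, the identity ∂ū/∂τ = −(1/τ)(α·∇_α ū + β ∂ū/∂β) fails at every point where x · (α − x) ≠ 0. -/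
open MeasureTheory Filter

noncomputable section

/-- `ū(α, β, τ) = σ((‖α − x‖ + β)/τ) · f(s|x; a, b)`. -/
def uBar (d K : ℕ) (x : Fin d → ℝ) (s : Fin K) (a : Fin K → Fin d → ℝ) (b : Fin K → ℝ)
    (α : Fin d → ℝ) (β τ : ℝ) : ℝ :=
  sigmoid ((enorm2 (fun u => α u - x u) + β) / τ) * expertF d K a b s x

lemma sigmoid_hasDerivAt (t : ℝ) :
    HasDerivAt sigmoid (sigmoid t * (1 - sigmoid t)) t := by
  have h1 : (0:ℝ) < 1 + Real.exp (-t) := by positivity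
  have h : HasDerivAt (fun u : ℝ => 1 + Real.exp (-u)) (-Real.exp (-t)) t := by
    simpa using (HasDerivAt.exp (hasDerivAt_neg t)).const_add 1
  have h2 := h.inv h1.ne'
  have he : sigmoid = fun u : ℝ => (1 + Real.exp (-u))⁻¹ := by
    funext u; simp [sigmoid, one_div]
  rw [he]
  refine h2.congr_deriv ?_
  beta_reduce
  field_simp
  ring

lemma sigmoid_lt_one (t : ℝ) : sigmoid t < 1 := by
  unfold sigmoid
  rw [div_lt_one (by positivity)]
  linarith [Real.exp_pos (-t)]

/-- **Failure of the interaction PDE under the Euclidean affinity score**: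
`∂ū/∂τ + (1/τ)(α·∇_α ū + β ∂ū/∂β) = (1/τ²)·σ'(g)·f(s|x;a,b)·(x·(α−x))/‖α−x‖` with
`σ' = σ(1−σ)` and `g = (‖α−x‖+β)/τ`; in particular the interaction identity
`∂ū/∂τ = −(1/τ)(α·∇_α ū + β ∂ū/∂β)` fails wherever `x·(α−x) ≠ 0`. -/
theorem interaction_PDE_fails_euclidean
    (d K : ℕ) (hd : 1 ≤ d) (hK : 2 ≤ K)
    (x : Fin d → ℝ) (s : Fin K) (a : Fin K → Fin d → ℝ) (b : Fin K → ℝ)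
    (α : Fin d → ℝ) (β τ : ℝ) (hτ : 0 < τ) (hαx : α ≠ x) :
    (deriv (fun t => uBar d K x s a b α β t) τ
        + (1 / τ) * ((fderiv ℝ (fun p => uBar d K x s a b p β τ) α) α
          + β * deriv (fun c => uBar d K x s a b α c τ) β) =
      (1 / τ ^ 2)
        * (sigmoid ((enorm2 (fun u => α u - x u) + β) / τ)
            * (1 - sigmoid ((enorm2 (fun u => α u - x u) + β) / τ)))
        * expertF d K a b s x
        * dot x (fun u => α u - x u) / enorm2 (fun u => α u - x u)) ∧
    (dot x (fun u => α u - x u) ≠ 0 →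
      deriv (fun t => uBar d K x s a b α β t) τ ≠
        -(1 / τ) * ((fderiv ℝ (fun p => uBar d K x s a b p β τ) α) α
          + β * deriv (fun c => uBar d K x s a b α c τ) β)) := by
  classical
  set F : ℝ := expertF d K a b s x with hFdef
  have hQpos : 0 < ∑ i, (α i - x i) ^ 2 := by
    have hex : ∃ i, α i ≠ x i := by
      by_contra h; push_neg at h; exact hαx (funext h)
    obtain ⟨i, hi⟩ := hex
    have : 0 < (α i - x i) ^ 2 := by
      have := sub_ne_zero.mpr hi; positivity
    exact Finset.sum_pos' (fun j _ => sq_nonneg _) ⟨i, Finset.mem_univ i, this⟩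
  have hrdef : enorm2 (fun u => α u - x u) = Real.sqrt (∑ i, (α i - x i) ^ 2) := rfl
  set r : ℝ := Real.sqrt (∑ i, (α i - x i) ^ 2) with hr0
  have hr : 0 < r := Real.sqrt_pos.mpr hQpos
  have hr2 : r ^ 2 = ∑ i, (α i - x i) ^ 2 := Real.sq_sqrt hQpos.le
  have hK0 : 0 < K := by omega
  haveI : NeZero K := ⟨hK0.ne'⟩
  have hF : 0 < F := by
    rw [hFdef, expertF]
    exact div_pos (Real.exp_pos _)
      (Finset.sum_pos (fun _ _ => Real.exp_pos _) Finset.univ_nonempty)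
  set g : ℝ := (r + β) / τ with hg0
  set S : ℝ := sigmoid g * (1 - sigmoid g) with hS0
  have hS : 0 < S := mul_pos (sigmoid_pos g) (by linarith [sigmoid_lt_one g])
  -- derivative in τ
  have h1 : HasDerivAt (fun t => uBar d K x s a b α β t) (S * (-(r + β) / τ ^ 2) * F) τ := by
    have hg : HasDerivAt (fun t : ℝ => (r + β) / t) (-(r + β) / τ ^ 2) τ := by
      simp only [div_eq_mul_inv]
      have := (hasDerivAt_inv hτ.ne').const_mul (r + β)
      refine this.congr_deriv ?_
      ring
    have := ((sigmoid_hasDerivAt g).comp τ hg).mul_const F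
    exact this.congr_deriv (by rw [hS0])
  -- derivative in β
  have h2 : HasDerivAt (fun c => uBar d K x s a b α c τ) (S * (1 / τ) * F) β := by
    have hg : HasDerivAt (fun c : ℝ => (r + c) / τ) (1 / τ) β := by
      simpa using ((hasDerivAt_id β).const_add r).div_const τ
    have := ((sigmoid_hasDerivAt g).comp β hg).mul_const F
    exact this.congr_deriv (by rw [hS0])
  -- fderiv in α
  have hQ : HasFDerivAt (fun p : Fin d → ℝ => ∑ i, (p i - x i) ^ 2)
      (∑ i, ((2 : ℝ) * (α i - x i)) • (ContinuousLinearMap.proj i :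
        (Fin d → ℝ) →L[ℝ] ℝ)) α := by
    apply HasFDerivAt.fun_sum
    intro i _
    have hp0 : HasFDerivAt (fun p : Fin d → ℝ => p i)
        (ContinuousLinearMap.proj i : (Fin d → ℝ) →L[ℝ] ℝ) α :=
      hasFDerivAt_apply i α
    have hp := hp0.sub_const (x i)
    have hmul := hp.mul hp
    have hfun : (fun y : Fin d → ℝ => (y i - x i) ^ 2)
        = (fun x_1 : Fin d → ℝ => x_1 i - x i) * fun x_1 => x_1 i - x i := by
      funext p; simp only [Pi.mul_apply]; ring
    rw [hfun]
    refine hmul.congr_fderiv ?_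
    rw [two_mul, add_smul]
  have hsqrt : HasDerivAt Real.sqrt (1 / (2 * r)) (∑ i, (α i - x i) ^ 2) := by
    simpa [hr0] using Real.hasDerivAt_sqrt hQpos.ne'
  have hrF : HasFDerivAt (fun p : Fin d → ℝ => Real.sqrt (∑ i, (p i - x i) ^ 2))
      ((1 / (2 * r)) • ∑ i, ((2 : ℝ) * (α i - x i)) • (ContinuousLinearMap.proj i :
        (Fin d → ℝ) →L[ℝ] ℝ)) α := hsqrt.comp_hasFDerivAt α hQ
  have hinner := (hrF.add_const β).mul_const τ⁻¹
  have hcomp := ((sigmoid_hasDerivAt g).comp_hasFDerivAt α hinner).mul_const F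
  have h3 : HasFDerivAt (fun p => uBar d K x s a b p β τ) _ α := hcomp
  have h3v : (fderiv ℝ (fun p => uBar d K x s a b p β τ) α) α
      = F * S * τ⁻¹ * (1 / (2 * r)) * ∑ i, 2 * (α i - x i) * α i := by
    rw [h3.fderiv]
    simp only [ContinuousLinearMap.smulRight_apply, ContinuousLinearMap.smul_apply,
      ContinuousLinearMap.coe_smul', Pi.smul_apply, ContinuousLinearMap.coe_sum',
      Finset.sum_apply, ContinuousLinearMap.proj_apply, smul_eq_mul, hS0]
    ring
  have hd1 : deriv (fun t => uBar d K x s a b α β t) τ = S * (-(r + β) / τ ^ 2) * F :=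
    h1.deriv
  have hd2 : deriv (fun c => uBar d K x s a b α c τ) β = S * (1 / τ) * F := h2.deriv
  have hdot : dot x (fun u => α u - x u) = ∑ i, x i * (α i - x i) := rfl
  have hsum : ∑ i, 2 * (α i - x i) * α i
      = 2 * (∑ i, x i * (α i - x i)) + 2 * r ^ 2 := by
    rw [hr2, Finset.mul_sum, Finset.mul_sum, ← Finset.sum_add_distrib]
    apply Finset.sum_congr rfl
    intro i _
    ring
  have hmain : deriv (fun t => uBar d K x s a b α β t) τ
        + (1 / τ) * ((fderiv ℝ (fun p => uBar d K x s a b p β τ) α) α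
          + β * deriv (fun c => uBar d K x s a b α c τ) β) =
      (1 / τ ^ 2) * S * F * dot x (fun u => α u - x u) / r := by
    rw [hd1, hd2, h3v, hdot, hsum]
    field_simp
    ring
  constructor
  · rw [hrdef]
    convert hmain using 2
    all_goals rw [hS0, hg0, hrdef]
  · intro hdotne hcontra
    rw [hcontra] at hmain
    have hzero : (1 / τ ^ 2) * S * F * dot x (fun u => α u - x u) / r = 0 := by
      rw [← hmain]; ring
    have : (1 / τ ^ 2) * S * F * dot x (fun u => α u - x u) / r ≠ 0 := by
      apply div_ne_zero _ hr.ne'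
      have h1 : (1 : ℝ) / τ ^ 2 ≠ 0 := by positivity
      exact mul_ne_zero (mul_ne_zero (mul_ne_zero h1 hS.ne') hF.ne') hdotne
    exact this hzero
end
end

section
/- Identifiability of a single scaled sigmoid gate: let γ, γ', β, β' ∈ ℝ and α, α' ∈ ℝ^d with α ≠ 0. If e^γ · σ(α·x + β) = e^{γ'} · σ(α'·x + β') for all x ∈ ℝ^d, then γ = γ', α = α', and β = β'. -/
noncomputable section

lemma dot_smul_right {d : ℕ} (v w : Fin d → ℝ) (t : ℝ) :
    dot v (t • w) = t * dot v w := by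
  simp only [dot, Pi.smul_apply, smul_eq_mul, Finset.mul_sum]
  exact Finset.sum_congr rfl fun i _ => by ring

lemma dot_zero_right {d : ℕ} (v : Fin d → ℝ) : dot v (0 : Fin d → ℝ) = 0 := by
  simp [dot]

lemma dot_single {d : ℕ} (v : Fin d → ℝ) (i : Fin d) :
    dot v (Pi.single i 1) = v i := by
  simp [dot, Pi.single_apply, mul_ite]

lemma aux_exp (A B a b c : ℝ) (hA : 0 < A) (hB : 0 < B) (hb : 0 < b)
    (h : ∀ t : ℝ, A * Real.exp (-(a * t)) - B * Real.exp (-(b * t)) = c) :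
    c = 0 := by
  -- derivative of the constant function is zero
  have hd : ∀ t : ℝ, a * (A * Real.exp (-(a * t))) = b * (B * Real.exp (-(b * t))) := by
    intro t
    have ha1 : HasDerivAt (fun t : ℝ => -(a * t)) (-a) t := by
      have := ((hasDerivAt_id t).const_mul a).neg; rw [mul_one] at this; exact this
    have hb1 : HasDerivAt (fun t : ℝ => -(b * t)) (-b) t := by
      have := ((hasDerivAt_id t).const_mul b).neg; rw [mul_one] at this; exact this
    have h1 : HasDerivAt (fun t : ℝ => A * Real.exp (-(a * t)) - B * Real.exp (-(b * t)))
        (A * (Real.exp (-(a * t)) * (-a)) - B * (Real.exp (-(b * t)) * (-b))) t :=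
      (ha1.exp.const_mul A).sub (hb1.exp.const_mul B)
    have hfun : (fun t : ℝ => A * Real.exp (-(a * t)) - B * Real.exp (-(b * t)))
        = fun _ : ℝ => c := funext h
    rw [hfun] at h1
    have h0 := h1.unique (hasDerivAt_const t c)
    nlinarith [h0]
  have h00 := hd 0
  simp at h00
  -- h00 : a * A = b * B
  by_cases hab : a = b
  · subst hab
    have hAB : A = B := by
      have : a * A = a * B := h00
      have ha0 : a ≠ 0 := by positivity
      exact mul_left_cancel₀ ha0 this
    have := h 0
    simp [hAB] at this
    linarith
  · exfalso
    have ha0 : 0 < a := by nlinarith [h00, Real.exp_pos (-(b:ℝ)), hB.le]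
    have h1 := hd 1
    rw [mul_one, mul_one] at h1
    have : a * A * Real.exp (-a) = a * A * Real.exp (-b) := by
      rw [mul_assoc, h1, ← mul_assoc, ← h00, mul_assoc]
    have hexp : Real.exp (-a) = Real.exp (-b) := by
      have haA : a * A ≠ 0 := by positivity
      exact mul_left_cancel₀ haA this
    exact hab (by have := Real.exp_injective hexp; linarith)

/-- **Identifiability of a single scaled sigmoid gate**: if `α ≠ 0` and
`e^γ σ(α·x + β) = e^{γ'} σ(α'·x + β')` for all `x ∈ ℝ^d`, then `γ = γ'`, `α = α'`
and `β = β'`. -/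
theorem scaled_sigmoid_gate_identifiable
    (d : ℕ) (hd : 1 ≤ d)
    (γ γ' β β' : ℝ) (α α' : Fin d → ℝ) (hα : α ≠ 0)
    (h : ∀ x : Fin d → ℝ,
      Real.exp γ * sigmoid (dot α x + β) = Real.exp γ' * sigmoid (dot α' x + β')) :
    γ = γ' ∧ α = α' ∧ β = β' := by
  -- clear denominators
  have key : ∀ x : Fin d → ℝ,
      Real.exp γ * (1 + Real.exp (-(dot α' x + β')))
        = Real.exp γ' * (1 + Real.exp (-(dot α x + β))) := by
    intro x
    have hx := h x
    have h1 : 0 < 1 + Real.exp (-(dot α x + β)) := by positivity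
    have h2 : 0 < 1 + Real.exp (-(dot α' x + β')) := by positivity
    unfold sigmoid at hx
    field_simp at hx
    rw [show (-(dot α' x + β')) = -β' + -dot α' x from by ring,
        show (-(dot α x + β)) = -β + -dot α x from by ring] at hx ⊢
    linarith [hx]
  -- positivity of b = dot α α
  have hb : 0 < dot α α := by
    rcases Function.ne_iff.mp hα with ⟨i, hi⟩
    have : (0:ℝ) < α i * α i := by
      rcases lt_or_gt_of_ne (show α i ≠ 0 by simpa using hi) with h' | h' <;> nlinarith
    unfold dot
    apply Finset.sum_pos' (fun j _ => mul_self_nonneg (α j)) ⟨i, Finset.mem_univ i, this⟩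
  set a : ℝ := dot α' α with ha_def
  set b : ℝ := dot α α with hb_def
  have hline : ∀ t : ℝ,
      (Real.exp γ * Real.exp (-β')) * Real.exp (-(a * t))
        - (Real.exp γ' * Real.exp (-β)) * Real.exp (-(b * t))
        = Real.exp γ' - Real.exp γ := by
    intro t
    have hk := key (t • α)
    rw [dot_smul_right, dot_smul_right, ← ha_def, ← hb_def] at hk
    have e1 : Real.exp (-(t * a + β')) = Real.exp (-β') * Real.exp (-(a * t)) := by
      rw [← Real.exp_add]; ring_nf
    have e2 : Real.exp (-(t * b + β)) = Real.exp (-β) * Real.exp (-(b * t)) := by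
      rw [← Real.exp_add]; ring_nf
    rw [e1, e2] at hk
    ring_nf
    ring_nf at hk
    linarith
  have hc := aux_exp (Real.exp γ * Real.exp (-β')) (Real.exp γ' * Real.exp (-β)) a b
      (Real.exp γ' - Real.exp γ) (by positivity) (by positivity) hb hline
  have hγ : γ = γ' := Real.exp_injective (by linarith)
  -- now exponents must agree
  have haffine : ∀ x : Fin d → ℝ, dot α' x + β' = dot α x + β := by
    intro x
    have hk := key x
    rw [hγ] at hk
    have h3 : Real.exp (-(dot α' x + β')) = Real.exp (-(dot α x + β)) := by
      have he : Real.exp γ' ≠ 0 := (Real.exp_pos _).ne'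
      have := mul_left_cancel₀ he hk
      linarith
    have := Real.exp_injective h3
    linarith
  have hβ : β = β' := by
    have := haffine 0
    rw [dot_zero_right, dot_zero_right] at this
    linarith
  refine ⟨hγ, ?_, hβ⟩
  funext i
  have := haffine (Pi.single i 1)
  rw [dot_single, dot_single, hβ] at this
  linarith
end
end
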